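/- Let A be a Banach algebra and D : A → A* a derivation with A* ⊆ D''(A**). If D'' : A** → A*** is a derivation, then A is Arens regular. -/

import Mathlib

/-!
Fix `f ∈ A*` and pick `F₀ ∈ A**` with `D''F₀ = f`, so that `F₀ (D'Φ) = Φ f` for all `Φ ∈ A**`.
Evaluating the derivation identity of `D''` at the pair `(G, F₀)` against `F` and expanding the
left side with the derivation identity of `D` produces `(F □ G)(f)` on one side and
`(F ◇ G)(f)` on the other, the remaining terms `G (D'(F₀ □ F))` being equal. Here
`F □ G = arens m F G` and `F ◇ G = arens m.flip G F` are the two Arens products.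
-/

/-- `NormedSpace.Dual` as it stood in the older Mathlib (since removed in favour of
`StrongDual`): the topological dual of a normed space. -/
abbrev NormedSpace.Dual (𝕜 : Type*) [NontriviallyNormedField 𝕜] (E : Type*)
    [SeminormedAddCommGroup E] [NormedSpace 𝕜 E] : Type _ :=
  E →L[𝕜] 𝕜

open ContinuousLinearMap NormedSpace

noncomputable section

section Defs

variable {X Y Z W : Type} [NormedAddCommGroup X] [NormedSpace ℝ X]
  [NormedAddCommGroup Y] [NormedSpace ℝ Y] [NormedAddCommGroup Z] [NormedSpace ℝ Z]
  [NormedAddCommGroup W] [NormedSpace ℝ W]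

/-- The first adjoint `m^*` of a bounded bilinear map `m : X × Y → Z`,
as a map `Z^* × X → Y^*`, `⟨m^*(z',x), y⟩ = ⟨z', m(x,y)⟩`. -/
def adj1 (m : X →L[ℝ] Y →L[ℝ] Z) :
    Dual ℝ Z →L[ℝ] X →L[ℝ] Dual ℝ Y :=
  (((ContinuousLinearMap.compL ℝ X (Y →L[ℝ] Z) (Dual ℝ Y)).flip m).comp
    (ContinuousLinearMap.compL ℝ Y Z ℝ))

@[simp] lemma adj1_apply (m : X →L[ℝ] Y →L[ℝ] Z) (z' : Dual ℝ Z) (x : X) (y : Y) :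
    adj1 m z' x y = z' (m x y) := rfl

/-- The first (left) Arens extension `m^{***} : X^{**} × Y^{**} → Z^{**}` of a
bounded bilinear map `m : X × Y → Z`. -/
def arens (m : X →L[ℝ] Y →L[ℝ] Z) :
    Dual ℝ (Dual ℝ X) →L[ℝ] Dual ℝ (Dual ℝ Y) →L[ℝ] Dual ℝ (Dual ℝ Z) :=
  adj1 (adj1 (adj1 m))

/-- The adjoint (dual map) of a bounded linear map. -/
def dualMap' (D : X →L[ℝ] Y) : Dual ℝ Y →L[ℝ] Dual ℝ X :=
  (ContinuousLinearMap.compL ℝ X Y ℝ).flip D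

@[simp] lemma dualMap'_apply (D : X →L[ℝ] Y) (g : Dual ℝ Y) (x : X) :
    dualMap' D g x = g (D x) := rfl

/-- The second adjoint `D'' : X^{**} → Y^{**}` of a bounded linear map. -/
def bidualMap (D : X →L[ℝ] Y) : Dual ℝ (Dual ℝ X) →L[ℝ] Dual ℝ (Dual ℝ Y) :=
  dualMap' (dualMap' D)

/-- Given an action `t : A × X → X`, the transposed action on the dual `X^*`:
`(dualAct t) a f = f ∘ (t a)`. -/
def dualAct (t : W →L[ℝ] X →L[ℝ] X) : W →L[ℝ] Dual ℝ X →L[ℝ] Dual ℝ X :=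
  ((ContinuousLinearMap.compL ℝ X X ℝ).flip).comp t

@[simp] lemma dualAct_apply (t : W →L[ℝ] X →L[ℝ] X) (a : W) (f : Dual ℝ X) (x : X) :
    dualAct t a f x = f (t a x) := rfl

/-- `D : A → X` is a derivation with respect to the multiplication `mul'` on `A`
and the left action `l` and right action `r` (`r a x` means `x · a`) of `A` on `X`. -/
def IsDer {A' : Type} [NormedAddCommGroup A'] [NormedSpace ℝ A']
    (mul' : A' →L[ℝ] A' →L[ℝ] A') (l r : A' →L[ℝ] X →L[ℝ] X) (D : A' →L[ℝ] X) : Prop :=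
  ∀ a b : A', D (mul' a b) = l a (D b) + r b (D a)

/-- `D : A → X` is an inner derivation: `D a = a·x - x·a` for some `x`. -/
def IsInner {A' : Type} [NormedAddCommGroup A'] [NormedSpace ℝ A']
    (l r : A' →L[ℝ] X →L[ℝ] X) (D : A' →L[ℝ] X) : Prop :=
  ∃ x : X, ∀ a : A', D a = l a x - r a x

/-- The bimodule axioms for actions `l`, `r` of an algebra with multiplication `mul'`. -/
def IsBimod {A' : Type} [NormedAddCommGroup A'] [NormedSpace ℝ A']
    (mul' : A' →L[ℝ] A' →L[ℝ] A') (l r : A' →L[ℝ] X →L[ℝ] X) : Prop :=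
  (∀ a b x, l (mul' a b) x = l a (l b x)) ∧
  (∀ a b x, r (mul' a b) x = r b (r a x)) ∧
  (∀ a b x, l a (r b x) = r b (l a x))

/-- weak*-to-weak* continuity of a map between dual spaces. -/
def WStarCont (f : Dual ℝ X → Dual ℝ Y) : Prop :=
  ∀ y : Y, Continuous fun φ : WeakDual ℝ X => f φ y

end Defs

/-- A packaged Banach `A`-bimodule (used to form iterated duals). -/
structure ModPk (A : Type) [NormedAddCommGroup A] [NormedSpace ℝ A] : Type 1 where
  X : Type
  [grp : NormedAddCommGroup X]
  [mod : NormedSpace ℝ X]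
  l : A →L[ℝ] X →L[ℝ] X
  r : A →L[ℝ] X →L[ℝ] X

attribute [instance] ModPk.grp ModPk.mod

variable {A : Type} [NormedAddCommGroup A] [NormedSpace ℝ A]

/-- The canonical dual of a packaged bimodule. -/
def ModPk.dual (P : ModPk A) : ModPk A :=
  ⟨Dual ℝ P.X, dualAct P.r, dualAct P.l⟩

/-- The `n`-th iterated dual of a packaged bimodule. -/
def ModPk.iter (P : ModPk A) : ℕ → ModPk A
  | 0 => P
  | n+1 => (P.iter n).dual

/-- A "level": an algebra (given by its bilinear multiplication) together with a bimodule. -/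
structure Lvl : Type 1 where
  Alg : Type
  [g1 : NormedAddCommGroup Alg]
  [m1 : NormedSpace ℝ Alg]
  Mod : Type
  [g2 : NormedAddCommGroup Mod]
  [m2 : NormedSpace ℝ Mod]
  mul : Alg →L[ℝ] Alg →L[ℝ] Alg
  l : Alg →L[ℝ] Mod →L[ℝ] Mod
  r : Alg →L[ℝ] Mod →L[ℝ] Mod

attribute [instance] Lvl.g1 Lvl.m1 Lvl.g2 Lvl.m2

/-- Passing to second duals: `A^{**}` with the first Arens product, acting on `B^{**}`
via the Arens extensions `π_ℓ^{***}` and `π_r^{***}` of the module actions. -/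
def Lvl.double (Q : Lvl) : Lvl where
  Alg := Dual ℝ (Dual ℝ Q.Alg)
  Mod := Dual ℝ (Dual ℝ Q.Mod)
  mul := arens Q.mul
  l := arens Q.l
  r := (arens Q.r.flip).flip

/-- Iterated even duals: `Lvl.iter Q n` is the level `(A^{(2n)}, B^{(2n)})`. -/
def Lvl.iter (Q : Lvl) : ℕ → Lvl
  | 0 => Q
  | n+1 => (Q.iter n).double

/-- The canonical embedding `A → A^{(2n)}`. -/
def Lvl.embA (Q : Lvl) : (n : ℕ) → Q.Alg →L[ℝ] (Q.iter n).Alg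
  | 0 => ContinuousLinearMap.id ℝ _
  | n+1 => (inclusionInDoubleDual ℝ ((Q.iter n).Alg)).comp (Q.embA n)

/-- The canonical embedding `B → B^{(2n)}`. -/
def Lvl.embM (Q : Lvl) : (n : ℕ) → Q.Mod →L[ℝ] (Q.iter n).Mod
  | 0 => ContinuousLinearMap.id ℝ _
  | n+1 => (inclusionInDoubleDual ℝ ((Q.iter n).Mod)).comp (Q.embM n)

/-- The left-topological-center condition `Z^ℓ_{A^{(2n+2)}}(B^{(2n+2)}) = B^{(2n+2)}`,
stated at the double of a level `Q`: for each `b` in the second-dual module, the map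
`a ↦ b·a` is weak*-to-weak* continuous. -/
def Lvl.doubleZl (Q : Lvl) : Prop :=
  ∀ b : (Q.double).Mod, WStarCont (X := Dual ℝ Q.Alg) (Y := Dual ℝ Q.Mod)
    (fun a => (Q.double).r a b)

/-- The base level of a Banach algebra `A` with a Banach `A`-bimodule `B`. -/
def lvlOf (A : Type) [NormedRing A] [NormedAlgebra ℝ A]
    (B : Type) [NormedAddCommGroup B] [NormedSpace ℝ B]
    (l r : A →L[ℝ] B →L[ℝ] B) : Lvl :=
  Lvl.mk A B (ContinuousLinearMap.mul ℝ A) l r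

section

variable {X Y : Type} [NormedAddCommGroup X] [NormedSpace ℝ X]
  [NormedAddCommGroup Y] [NormedSpace ℝ Y]

lemma apply_dualMap'_of_bidualMap_eq {D : X →L[ℝ] Y} {F₀ : Dual ℝ (Dual ℝ X)} {y : Y}
    (h : bidualMap D F₀ = inclusionInDoubleDual ℝ Y y) (Φ : Dual ℝ Y) :
    F₀ (dualMap' D Φ) = Φ y :=
  congrArg (fun T : Dual ℝ (Dual ℝ Y) => T Φ) h

end

section

variable {m : A →L[ℝ] A →L[ℝ] A} {D : A →L[ℝ] Dual ℝ A}

/-- `D'(F) · a = D'(F · a) + F · D(a)` in `A*`. -/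
lemma adj1_dualMap'_of_isDer (hD : IsDer m (dualAct m.flip) (dualAct m) D)
    (F : Dual ℝ (Dual ℝ A)) (a : A) :
    adj1 m (dualMap' D F) a =
      dualMap' D (F.comp (dualAct m.flip a)) + adj1 (adj1 m) F (D a) := by
  ext b
  exact (congrArg F (hD a b)).trans (map_add F _ _)

lemma adj1_adj1_dualMap'_of_bidualMap_eq (hD : IsDer m (dualAct m.flip) (dualAct m) D)
    {F₀ : Dual ℝ (Dual ℝ A)} {f : Dual ℝ A} (hF₀ : bidualMap D F₀ = inclusionInDoubleDual ℝ _ f)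
    (F : Dual ℝ (Dual ℝ A)) :
    adj1 (adj1 m) F₀ (dualMap' D F) =
      adj1 (adj1 m.flip) F f + dualMap' D (arens m F₀ F) := by
  ext a
  change F₀ (adj1 m (dualMap' D F) a) = _
  rw [adj1_dualMap'_of_isDer hD, map_add, apply_dualMap'_of_bidualMap_eq hF₀]
  rfl

lemma arens_apply_dualMap'_eq_of_bidualMap_eq (hD : IsDer m (dualAct m.flip) (dualAct m) D)
    {F₀ : Dual ℝ (Dual ℝ A)} {f : Dual ℝ A} (hF₀ : bidualMap D F₀ = inclusionInDoubleDual ℝ _ f)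
    (F G : Dual ℝ (Dual ℝ A)) :
    arens m G F₀ (dualMap' D F) = arens m.flip G F f + G (dualMap' D (arens m F₀ F)) :=
  (congrArg G (adj1_adj1_dualMap'_of_bidualMap_eq hD hF₀ F)).trans (map_add G _ _)

lemma arens_apply_dualMap'_eq_of_isDer_bidualMap
    (hD'' : IsDer (arens m)
      (dualAct (W := Dual ℝ (Dual ℝ A)) (X := Dual ℝ (Dual ℝ A)) (arens m).flip)
      (dualAct (W := Dual ℝ (Dual ℝ A)) (X := Dual ℝ (Dual ℝ A)) (arens m)) (bidualMap D))
    (F G H : Dual ℝ (Dual ℝ A)) :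
    arens m G H (dualMap' D F) =
      H (dualMap' D (arens m F G)) + G (dualMap' D (arens m H F)) :=
  congrArg (fun T : Dual ℝ (Dual ℝ (Dual ℝ A)) => T F) (hD'' G H)

end

theorem stmt17_general (A : Type) [NormedRing A] [NormedAlgebra ℝ A]
    (D : A →L[ℝ] Dual ℝ A)
    (hD : IsDer (ContinuousLinearMap.mul ℝ A)
      (dualAct (ContinuousLinearMap.mul ℝ A).flip) (dualAct (ContinuousLinearMap.mul ℝ A)) D)
    -- `A* ⊆ D''(A**)`
    (hsub : ∀ a' : Dual ℝ A, ∃ F : Dual ℝ (Dual ℝ A),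
      bidualMap D F = inclusionInDoubleDual ℝ (Dual ℝ A) a')
    -- `D'' : A** → A***` is a derivation
    (hD'' : IsDer (arens (ContinuousLinearMap.mul ℝ A))
      (dualAct (W := Dual ℝ (Dual ℝ A)) (X := Dual ℝ (Dual ℝ A))
        ((arens (ContinuousLinearMap.mul ℝ A).flip.flip).flip))
      (dualAct (W := Dual ℝ (Dual ℝ A)) (X := Dual ℝ (Dual ℝ A))
        (arens (ContinuousLinearMap.mul ℝ A)))
      (bidualMap D)) :
    -- `A` is Arens regular
    ∀ F G : Dual ℝ (Dual ℝ A),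
      arens (ContinuousLinearMap.mul ℝ A) F G =
        arens (ContinuousLinearMap.mul ℝ A).flip G F := by
  intro F G
  ext f
  obtain ⟨F₀, hF₀⟩ := hsub f
  have h := arens_apply_dualMap'_eq_of_isDer_bidualMap hD'' F G F₀
  rw [apply_dualMap'_of_bidualMap_eq hF₀, arens_apply_dualMap'_eq_of_bidualMap_eq hD hF₀] at h
  exact (add_right_cancel h).symm

/-- **Corollary 2-31.** Let `A` be a Banach algebra and `D : A → A*` a derivation with
`A* ⊆ D''(A**)`. If `D'' : A** → A***` is a derivation, then `A` is Arens regular. -/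
theorem stmt17 (A : Type) [NormedRing A] [NormedAlgebra ℝ A] [CompleteSpace A]
    (D : A →L[ℝ] Dual ℝ A)
    (hD : IsDer (ContinuousLinearMap.mul ℝ A)
      (dualAct (ContinuousLinearMap.mul ℝ A).flip) (dualAct (ContinuousLinearMap.mul ℝ A)) D)
    -- `A* ⊆ D''(A**)`
    (hsub : ∀ a' : Dual ℝ A, ∃ F : Dual ℝ (Dual ℝ A),
      bidualMap D F = inclusionInDoubleDual ℝ (Dual ℝ A) a')
    -- `D'' : A** → A***` is a derivation
    (hD'' : IsDer (arens (ContinuousLinearMap.mul ℝ A))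
      (dualAct (W := Dual ℝ (Dual ℝ A)) (X := Dual ℝ (Dual ℝ A))
        ((arens (ContinuousLinearMap.mul ℝ A).flip.flip).flip))
      (dualAct (W := Dual ℝ (Dual ℝ A)) (X := Dual ℝ (Dual ℝ A))
        (arens (ContinuousLinearMap.mul ℝ A)))
      (bidualMap D)) :
    -- `A` is Arens regular
    ∀ F G : Dual ℝ (Dual ℝ A),
      arens (ContinuousLinearMap.mul ℝ A) F G =
        arens (ContinuousLinearMap.mul ℝ A).flip G F :=
  stmt17_general A D hD hsub hD''
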